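/- arXiv:2206.03329 — 2 statements merged into one kernel-verified Lean document; each statement's English description precedes it below -/
import Mathlib

section
/- Let ∇U: ℝ^d → ℝ^d satisfy ⟨x, ∇U(x)⟩ ≥ r‖x‖^{1−q} and ‖∇U(x)‖ ≤ ‖x‖^{β} for all ‖x‖ ≥ M, where q ∈ (0,1), r > 0, β ≤ (1−q)/2, M ≥ 1. Set Φ(x) = x − Δ∇U(x) for a step size Δ > 0 satisfying Δ ≤ r if β = (1−q)/2 (no restriction if β < (1−q)/2, provided M is large enough that Δ‖x‖^{2β} ≤ r‖x‖^{1-q} for ‖x‖≥M). Then for all ‖x‖ ≥ M, ‖Φ(x)‖ ≤ ‖x‖ (1 − (rΔ/2) ‖x‖^{−(1+q)}). -/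
/-!
Expanding the square, ‖x - Δ∇U(x)‖² = ‖x‖² - 2Δ⟨x, ∇U(x)⟩ + Δ²‖∇U(x)‖², and the growth
condition on ∇U makes the last term at most half of the drift term, so
‖Φ(x)‖² ≤ ‖x‖²(1 - t) with t = Δr‖x‖^{-(1+q)} ≤ 1. Since 1 - t ≤ (1 - t/2)², taking square
roots gives the contraction.
-/

open scoped RealInnerProductSpace

theorem norm_sub_smul_sq_le {E : Type*} [NormedAddCommGroup E] [InnerProductSpace ℝ E]
    {x g : E} {Δ a : ℝ} (hΔ : 0 ≤ Δ) (hinner : a ≤ ⟪x, g⟫) (hnorm : Δ * ‖g‖ ^ 2 ≤ a) :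
    ‖x - Δ • g‖ ^ 2 ≤ ‖x‖ ^ 2 - Δ * a := by
  have hexpand : ‖x - Δ • g‖ ^ 2 = ‖x‖ ^ 2 - 2 * (Δ * ⟪x, g⟫) + Δ * (Δ * ‖g‖ ^ 2) := by
    rw [norm_sub_sq_real, real_inner_smul_right, norm_smul, Real.norm_eq_abs, abs_of_nonneg hΔ]
    ring
  rw [hexpand]
  nlinarith [mul_le_mul_of_nonneg_left hinner hΔ, mul_le_mul_of_nonneg_left hnorm hΔ]

theorem le_mul_one_sub_half_of_sq_le {u s t : ℝ} (hu : 0 ≤ u) (hs : 0 ≤ s) (ht : t ≤ 1)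
    (h : u ^ 2 ≤ s ^ 2 * (1 - t)) : u ≤ s * (1 - t / 2) := by
  have hrhs : 0 ≤ s * (1 - t / 2) := mul_nonneg hs (by linarith)
  refine (pow_le_pow_iff_left₀ hu hrhs two_ne_zero).mp ?_
  calc u ^ 2 ≤ s ^ 2 * (1 - t) := h
    _ ≤ s ^ 2 * (1 - t / 2) ^ 2 := by gcongr; nlinarith [sq_nonneg t]
    _ = (s * (1 - t / 2)) ^ 2 := by ring

theorem stmt_6_general {d : ℕ} (q r β Δ M : ℝ)
    (hΔ : 0 < Δ) (hM : 1 ≤ M)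
    (gradU : EuclideanSpace ℝ (Fin d) → EuclideanSpace ℝ (Fin d))
    (hinner : ∀ x, M ≤ ‖x‖ → r * ‖x‖ ^ (1 - q) ≤ ⟪x, gradU x⟫)
    (hnorm : ∀ x, M ≤ ‖x‖ → ‖gradU x‖ ≤ ‖x‖ ^ β)
    (hprov : ∀ x : EuclideanSpace ℝ (Fin d), M ≤ ‖x‖ →
      Δ * ‖x‖ ^ (2 * β) ≤ r * ‖x‖ ^ (1 - q))
    (ht : ∀ x : EuclideanSpace ℝ (Fin d), M ≤ ‖x‖ →
      Δ * r * ‖x‖ ^ (-(1 + q)) ≤ 1) :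
    ∀ x, M ≤ ‖x‖ →
      ‖x - Δ • gradU x‖ ≤ ‖x‖ * (1 - (r * Δ / 2) * ‖x‖ ^ (-(1 + q))) := by
  intro x hx
  have hxpos : 0 < ‖x‖ := by linarith
  have hgrad_sq : ‖gradU x‖ ^ 2 ≤ ‖x‖ ^ (2 * β) := by
    rw [mul_comm, Real.rpow_mul hxpos.le, Real.rpow_two]
    exact pow_le_pow_left₀ (norm_nonneg _) (hnorm x hx) 2
  have hstep : ‖x - Δ • gradU x‖ ^ 2 ≤ ‖x‖ ^ 2 - Δ * (r * ‖x‖ ^ (1 - q)) :=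
    norm_sub_smul_sq_le hΔ.le (hinner x hx)
      ((mul_le_mul_of_nonneg_left hgrad_sq hΔ.le).trans (hprov x hx))
  have hdrift : ‖x‖ ^ 2 - Δ * (r * ‖x‖ ^ (1 - q))
      = ‖x‖ ^ 2 * (1 - Δ * r * ‖x‖ ^ (-(1 + q))) := by
    have hpow : ‖x‖ ^ (1 - q) = ‖x‖ ^ 2 * ‖x‖ ^ (-(1 + q)) := by
      rw [← Real.rpow_two, ← Real.rpow_add hxpos]
      ring_nf
    rw [hpow]
    ring
  have h := le_mul_one_sub_half_of_sq_le (norm_nonneg _) hxpos.le (ht x hx) (hdrift ▸ hstep)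
  convert h using 3
  ring

theorem stmt_6 {d : ℕ} (q r β Δ M : ℝ) (hq0 : 0 < q) (hq1 : q < 1) (hr : 0 < r)
    (hβ : β ≤ (1 - q) / 2) (hΔ : 0 < Δ) (hM : 1 ≤ M)
    (gradU : EuclideanSpace ℝ (Fin d) → EuclideanSpace ℝ (Fin d))
    (hinner : ∀ x, M ≤ ‖x‖ → r * ‖x‖ ^ (1 - q) ≤ ⟪x, gradU x⟫)
    (hnorm : ∀ x, M ≤ ‖x‖ → ‖gradU x‖ ≤ ‖x‖ ^ β)
    (hprov : ∀ x : EuclideanSpace ℝ (Fin d), M ≤ ‖x‖ →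
      Δ * ‖x‖ ^ (2 * β) ≤ r * ‖x‖ ^ (1 - q))
    (ht : ∀ x : EuclideanSpace ℝ (Fin d), M ≤ ‖x‖ →
      Δ * r * ‖x‖ ^ (-(1 + q)) ≤ 1) :
    ∀ x, M ≤ ‖x‖ →
      ‖x - Δ • gradU x‖ ≤ ‖x‖ * (1 - (r * Δ / 2) * ‖x‖ ^ (-(1 + q))) :=
  stmt_6_general q r β Δ M hΔ hM gradU hinner hnorm hprov ht
end

section
/- Let A₁,…,A_n be symmetric d×d real matrices, q₁ > q₂ > ⋯ > q_n in [−1,1), α_i > 0, and suppose there exists k₀ ∈ {1,…,n} with λ_max(A_{k₀}) < 0 and λ_max(A_k) = 0 for all k > k₀. Define b(x) = Σ_{i=1}^n A_i x (α_i + ‖x‖)^{−(q_i+1)}. Then there exist M₀ > 0 and r > 0 such that for all x with ‖x‖ ≥ M₀, ⟨b(x), x/‖x‖⟩ ≤ −r‖x‖^{−q_{k₀}}. -/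
/-!
Bound each quadratic form by `λ_max(A_i) ‖x‖²`, so that with `s = ‖x‖` the radial drift is at
most `g(s) s`, where `g(s) = Σ λ_max(A_i) (α_i + s)^{-(q_i+1)}`. Since `(α_i + s)^{-(q_i+1)}`
is asymptotic to `s^{-(q_i+1)}`, the rescaled sum `g(s) s^{q_{k₀}+1}` tends to `λ_max(A_{k₀}) < 0`:
the terms with `i < k₀` decay because `q_i > q_{k₀}`, and those with `i > k₀` vanish.
Hence eventually `g(s) s ≤ (λ_max(A_{k₀}) / 2) s^{-q_{k₀}}`.
-/

open Matrix Filter Topology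

theorem sum_smul_mulVec_dotProduct_le {ι m : Type*} [Fintype ι] [Fintype m]
    (A : ι → Matrix m m ℝ) (lmax : ι → ℝ)
    (hCF : ∀ k (v : m → ℝ), v ⬝ᵥ (A k).mulVec v ≤ lmax k * (v ⬝ᵥ v))
    (c : ι → ℝ) (hc : ∀ i, 0 ≤ c i) (x : m → ℝ) :
    (∑ i, c i • (A i).mulVec x) ⬝ᵥ x ≤ (∑ i, c i * lmax i) * (x ⬝ᵥ x) := by
  rw [sum_dotProduct, Finset.sum_mul]
  gcongr with i
  rw [smul_dotProduct, dotProduct_comm, smul_eq_mul, mul_assoc]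
  exact mul_le_mul_of_nonneg_left (hCF i x) (hc i)

theorem tendsto_add_rpow_neg_mul_rpow (a p : ℝ) :
    Tendsto (fun s : ℝ => (a + s) ^ (-p) * s ^ p) atTop (𝓝 1) := by
  have hbase : Tendsto (fun s : ℝ => a * s⁻¹ + 1) atTop (𝓝 1) := by
    simpa using (tendsto_inv_atTop_zero.const_mul a).add_const 1
  have hlim := hbase.rpow_const (p := -p) (Or.inl one_ne_zero)
  rw [Real.one_rpow] at hlim
  refine hlim.congr' ?_
  filter_upwards [eventually_gt_atTop 0, eventually_ge_atTop (-a)] with s hs has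
  rw [show a * s⁻¹ + 1 = (a + s) * s⁻¹ by field_simp, Real.mul_rpow (by linarith) (by positivity),
    Real.inv_rpow hs.le, Real.rpow_neg hs.le, inv_inv]

theorem tendsto_add_rpow_neg_mul_rpow_of_lt (a : ℝ) {p e : ℝ} (hep : e < p) :
    Tendsto (fun s : ℝ => (a + s) ^ (-p) * s ^ e) atTop (𝓝 0) := by
  have h := (tendsto_add_rpow_neg_mul_rpow a p).mul (tendsto_rpow_neg_atTop (sub_pos.2 hep))
  rw [mul_zero] at h
  refine h.congr' ?_
  filter_upwards [eventually_gt_atTop 0] with s hs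
  rw [mul_assoc, ← Real.rpow_add hs]
  ring_nf

theorem tendsto_sum_add_rpow_neg_mul_rpow {ι : Type*} [Fintype ι] [LinearOrder ι]
    (α q lmax : ι → ℝ) (k₀ : ι) (hlow : ∀ i < k₀, q k₀ < q i)
    (hhigh : ∀ i, k₀ < i → lmax i = 0) :
    Tendsto (fun s : ℝ => (∑ i, (α i + s) ^ (-(q i + 1)) * lmax i) * s ^ (q k₀ + 1))
      atTop (𝓝 (lmax k₀)) := by
  have hterm : ∀ i, Tendsto (fun s : ℝ => (α i + s) ^ (-(q i + 1)) * s ^ (q k₀ + 1) * lmax i)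
      atTop (𝓝 (if i = k₀ then lmax k₀ else 0)) := by
    intro i
    rcases lt_trichotomy i k₀ with hi | rfl | hi
    · have hq : q k₀ + 1 < q i + 1 := by linarith [hlow i hi]
      simpa [hi.ne] using (tendsto_add_rpow_neg_mul_rpow_of_lt (α i) hq).mul_const (lmax i)
    · simpa using (tendsto_add_rpow_neg_mul_rpow (α i) (q i + 1)).mul_const (lmax i)
    · simp [hhigh i hi, hi.ne']
  have hsum := tendsto_finsetSum Finset.univ fun i _ => hterm i
  rw [Finset.sum_ite_eq' Finset.univ k₀, if_pos (Finset.mem_univ _)] at hsum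
  refine hsum.congr fun s => ?_
  rw [Finset.sum_mul]
  exact Finset.sum_congr rfl fun i _ => by ring

theorem stmt_8_general {d n : ℕ} (A : Fin n → Matrix (Fin d) (Fin d) ℝ)
    (q : Fin n → ℝ) (hqmono : ∀ i j : Fin n, i < j → q j < q i)
    (α : Fin n → ℝ)
    (lmax : Fin n → ℝ)
    (hCF : ∀ k (v : Fin d → ℝ), v ⬝ᵥ (A k).mulVec v ≤ lmax k * (v ⬝ᵥ v))
    (k₀ : Fin n) (hneg : lmax k₀ < 0) (hzero : ∀ k, k₀ < k → lmax k = 0) :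
    ∃ M₀ > (0 : ℝ), ∃ r > (0 : ℝ), ∀ x : Fin d → ℝ, M₀ ≤ Real.sqrt (x ⬝ᵥ x) →
      ((∑ i, (α i + Real.sqrt (x ⬝ᵥ x)) ^ (-(q i + 1)) • (A i).mulVec x) ⬝ᵥ x)
          / Real.sqrt (x ⬝ᵥ x)
        ≤ -r * Real.sqrt (x ⬝ᵥ x) ^ (-(q k₀)) := by
  have hlim := tendsto_sum_add_rpow_neg_mul_rpow α q lmax k₀ (fun i hi => hqmono i k₀ hi) hzero
  obtain ⟨M, hM⟩ := eventually_atTop.1 <|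
    (hlim.eventually_le_const (by linarith : lmax k₀ < lmax k₀ / 2)).and
      ((eventually_gt_atTop 0).and (eventually_all.2 fun i => eventually_ge_atTop (-α i)))
  refine ⟨max M 1, by positivity, -(lmax k₀ / 2), by linarith, fun x hx => ?_⟩
  set s := Real.sqrt (x ⬝ᵥ x)
  obtain ⟨hbound, hs, hαs⟩ := hM s (le_of_max_le_left hx)
  have hxx : x ⬝ᵥ x = s * s := (Real.mul_self_sqrt (dotProduct_self_star_nonneg x)).symm
  have hcoef : ∀ i, 0 ≤ (α i + s) ^ (-(q i + 1)) :=
    fun i => Real.rpow_nonneg (by linarith [hαs i]) _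
  rw [div_le_iff₀ hs]
  calc (∑ i, (α i + s) ^ (-(q i + 1)) • (A i).mulVec x) ⬝ᵥ x
      ≤ (∑ i, (α i + s) ^ (-(q i + 1)) * lmax i) * (s * s) :=
        hxx ▸ sum_smul_mulVec_dotProduct_le A lmax hCF _ hcoef x
    _ = (∑ i, (α i + s) ^ (-(q i + 1)) * lmax i) * s ^ (q k₀ + 1) * s ^ (-q k₀) * s := by
        have hsplit : s ^ (q k₀ + 1) * s ^ (-q k₀) = s := by
          rw [← Real.rpow_add hs, add_neg_cancel_comm, Real.rpow_one]
        linear_combination (-(∑ i, (α i + s) ^ (-(q i + 1)) * lmax i) * s) * hsplit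
    _ ≤ lmax k₀ / 2 * s ^ (-q k₀) * s := by gcongr
    _ = -(-(lmax k₀ / 2)) * s ^ (-q k₀) * s := by ring

theorem stmt_8 {d n : ℕ} (A : Fin n → Matrix (Fin d) (Fin d) ℝ)
    (hsym : ∀ i, (A i).IsSymm)
    (q : Fin n → ℝ) (hqmono : ∀ i j : Fin n, i < j → q j < q i)
    (hqr : ∀ i, -1 ≤ q i ∧ q i < 1)
    (α : Fin n → ℝ) (hα : ∀ i, 0 < α i)
    (lmax : Fin n → ℝ)
    (hCF : ∀ k (v : Fin d → ℝ), v ⬝ᵥ (A k).mulVec v ≤ lmax k * (v ⬝ᵥ v))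
    (k₀ : Fin n) (hneg : lmax k₀ < 0) (hzero : ∀ k, k₀ < k → lmax k = 0) :
    ∃ M₀ > (0 : ℝ), ∃ r > (0 : ℝ), ∀ x : Fin d → ℝ, M₀ ≤ Real.sqrt (x ⬝ᵥ x) →
      ((∑ i, (α i + Real.sqrt (x ⬝ᵥ x)) ^ (-(q i + 1)) • (A i).mulVec x) ⬝ᵥ x)
          / Real.sqrt (x ⬝ᵥ x)
        ≤ -r * Real.sqrt (x ⬝ᵥ x) ^ (-(q k₀)) :=
  stmt_8_general A q hqmono α lmax hCF k₀ hneg hzero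
end
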